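/- arXiv:2109.00370 — 3 statements merged into one kernel-verified Lean document; each statement's English description precedes it below -/
import Mathlib

section
/- Let $\xi \in (0, 1/2]$, $k > 0$, $\sigma \in \{1,-1\}$, and suppose $\sigma = 1$ and $m$ strictly increasing on $(0,\infty)$, or $\sigma = -1$ and $m$ strictly decreasing on $(0,\infty)$, with $m$ even and $m(0)=1$. Then $\ell_c^2 := \sigma\xi(1-\xi)\big[(1-\xi)(m(k)-m(k(1-\xi))) + \xi(m(k)-m(k\xi))\big] > 0$, and at $\ell^2 = \ell_c^2$ the eigenvalues collide: $\omega_{-1,\ell_c,\xi} = \omega_{0,\ell_c,\xi}$, where $\omega_{n,\ell,\xi} = (n+\xi)(m(k)-m(k(n+\xi))) - \sigma\ell^2/(n+\xi)$. -/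
/-! Evenness of `m` turns `ω_{-1}` into an expression in `m(k(1-ξ))`, and clearing the
denominators `ξ - 1` and `ξ` shows that both frequencies equal `ξ²B - (1-ξ)²A` at the collision
value, with `A = m k - m (k(1-ξ))`, `B = m k - m (kξ)`. Positivity of `ℓ_c²` holds because
`σ (m k - m (k t)) > 0` for `t ∈ (0,1)`: the sign of `σ` matches the direction of monotonicity. -/

lemma collision_identity {A B σ ξ : ℝ} (hσ : σ ^ 2 = 1) (hξ0 : ξ ≠ 0) (hξ1 : ξ ≠ 1) :
    (ξ - 1) * A - σ * (σ * ξ * (1 - ξ) * ((1 - ξ) * A + ξ * B)) / (ξ - 1)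
      = ξ * B - σ * (σ * ξ * (1 - ξ) * ((1 - ξ) * A + ξ * B)) / ξ := by
  have hξ1' : ξ - 1 ≠ 0 := sub_ne_zero.mpr hξ1
  have hσσ : σ * (σ * ξ * (1 - ξ) * ((1 - ξ) * A + ξ * B))
      = ξ * (1 - ξ) * ((1 - ξ) * A + ξ * B) := by
    linear_combination ξ * (1 - ξ) * ((1 - ξ) * A + ξ * B) * hσ
  rw [hσσ]
  field_simp
  ring

lemma sign_mul_sub_pos {m : ℝ → ℝ} {σ k t : ℝ}
    (hcase : (σ = 1 ∧ StrictMonoOn m (Set.Ioi 0)) ∨ (σ = -1 ∧ StrictAntiOn m (Set.Ioi 0)))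
    (hk : 0 < k) (ht : t ∈ Set.Ioo 0 1) : 0 < σ * (m k - m (k * t)) := by
  have hkt : k * t ∈ Set.Ioi (0 : ℝ) := mul_pos hk ht.1
  have hlt : k * t < k := mul_lt_of_lt_one_right hk ht.2
  rcases hcase with ⟨rfl, hm⟩ | ⟨rfl, hm⟩
  · linarith [hm hkt (Set.mem_Ioi.mpr hk) hlt]
  · linarith [hm hkt (Set.mem_Ioi.mpr hk) hlt]

lemma sq_eq_one_of_cases {m : ℝ → ℝ} {σ : ℝ}
    (hcase : (σ = 1 ∧ StrictMonoOn m (Set.Ioi 0)) ∨ (σ = -1 ∧ StrictAntiOn m (Set.Ioi 0))) :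
    σ ^ 2 = 1 := by
  rcases hcase with ⟨rfl, -⟩ | ⟨rfl, -⟩ <;> norm_num

theorem collision_bloch_minus_one_zero_general (m : ℝ → ℝ) (hmeven : ∀ x, m (-x) = m x)
    (σ k ξ : ℝ) (hk : 0 < k) (hξ : ξ ∈ Set.Ioc 0 (1 / 2))
    (hcase : (σ = 1 ∧ StrictMonoOn m (Set.Ioi 0)) ∨ (σ = -1 ∧ StrictAntiOn m (Set.Ioi 0))) :
    ∀ L : ℝ,
      L = σ * ξ * (1 - ξ) * ((1 - ξ) * (m k - m (k * (1 - ξ))) + ξ * (m k - m (k * ξ))) →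
      0 < L ∧
      ((-1 : ℝ) + ξ) * (m k - m (k * ((-1 : ℝ) + ξ))) - σ * L / ((-1 : ℝ) + ξ)
        = ((0 : ℝ) + ξ) * (m k - m (k * ((0 : ℝ) + ξ))) - σ * L / ((0 : ℝ) + ξ) := by
  rintro L rfl
  obtain ⟨hξ0, hξ2⟩ := hξ
  have hA := sign_mul_sub_pos hcase hk (t := 1 - ξ) ⟨by linarith, by linarith⟩
  have hB := sign_mul_sub_pos hcase hk (t := ξ) ⟨hξ0, by linarith⟩
  have heven : m (k * (ξ - 1)) = m (k * (1 - ξ)) := by rw [← hmeven, ← mul_neg, neg_sub]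
  refine ⟨?_, ?_⟩
  · have hsum := add_pos (mul_pos (sub_pos.mpr (by linarith : ξ < 1)) hA) (mul_pos hξ0 hB)
    have := mul_pos (mul_pos hξ0 (sub_pos.mpr (by linarith : ξ < 1))) hsum
    linear_combination this
  · simp only [neg_add_eq_sub, zero_add, heven]
    exact collision_identity (sq_eq_one_of_cases hcase) hξ0.ne' (by linarith)

/-- For `ξ ∈ (0,1/2]`, `k > 0`, and `(σ,m) = (1,↑)` or `(-1,↓)`, the collision value
`ℓ_c² = σξ(1-ξ)[(1-ξ)(m(k)-m(k(1-ξ))) + ξ(m(k)-m(kξ))]` is strictly positive, and at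
`ℓ² = ℓ_c²` the eigenvalue frequencies `ω_{-1,ℓ,ξ}` and `ω_{0,ℓ,ξ}` coincide, where
`ω_{n,ℓ,ξ} = (n+ξ)(m(k)-m(k(n+ξ))) - σℓ²/(n+ξ)`. -/
theorem collision_bloch_minus_one_zero (m : ℝ → ℝ) (hmeven : ∀ x, m (-x) = m x)
    (hm0 : m 0 = 1) (σ k ξ : ℝ) (hk : 0 < k) (hξ : ξ ∈ Set.Ioc 0 (1 / 2))
    (hcase : (σ = 1 ∧ StrictMonoOn m (Set.Ioi 0)) ∨ (σ = -1 ∧ StrictAntiOn m (Set.Ioi 0))) :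
    ∀ L : ℝ,
      L = σ * ξ * (1 - ξ) * ((1 - ξ) * (m k - m (k * (1 - ξ))) + ξ * (m k - m (k * ξ))) →
      0 < L ∧
      ((-1 : ℝ) + ξ) * (m k - m (k * ((-1 : ℝ) + ξ))) - σ * L / ((-1 : ℝ) + ξ)
        = ((0 : ℝ) + ξ) * (m k - m (k * ((0 : ℝ) + ξ))) - σ * L / ((0 : ℝ) + ξ) :=
  collision_bloch_minus_one_zero_general m hmeven σ k ξ hk hξ hcase
end

section
/- Let $m$ be even with $m(0)=1$, strictly monotone on $(0,\infty)$, $k>0$, $\sigma\in\{1,-1\}$, and $\xi \in (\epsilon, 1/2]$ for some fixed $\epsilon > 0$. Then there exists $\ell^* > 0$ such that for all $\ell$ with $0 < |\ell| < \ell^*$, the frequencies $\omega_{n,\ell,\xi} = (n+\xi)(m(k)-m(k(n+\xi))) - \sigma\ell^2/(n+\xi)$, $n \in \mathbb{Z}$, are pairwise distinct (no collisions among eigenvalues of $\mathcal{A}_0(\ell,\xi)$). -/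
/-!
With `a = n + ξ` and `F a = a (m k - m (k a))`, the frequencies of `a ≠ b` collide exactly when
`σ ℓ² = (F a - F b) a b / (b - a)`. On the lattice `ℤ + ξ` we have `|a| ≥ ξ`, so this collision
value is at least `c ξ²` in absolute value whenever `|F a - F b| ≥ c |a - b|`. Evenness and
monotonicity of `m` give such an expansion bound as soon as `|a|` is large; the finitely many
remaining pairs have finitely many collision values, and the nonzero ones stay away from `0`.
-/

open Filter Set Function

theorem eq_mul_div_of_sub_div_eq_sub_div {K : Type*} [Field K] {x y u v s : K}
    (hu : u ≠ 0) (hv : v ≠ 0) (huv : u ≠ v) (h : x - s / u = y - s / v) :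
    s = (x - y) * (u * v) / (v - u) := by
  rw [eq_div_iff (sub_ne_zero.mpr huv.symm)]
  field_simp at h
  linear_combination -h

theorem Set.Finite.exists_pos_le_dist_of_ne {X : Type*} [MetricSpace X] {T : Set X}
    (hT : T.Finite) (y : X) : ∃ δ > 0, ∀ x ∈ T, x ≠ y → δ ≤ dist x y := by
  obtain ⟨δ, hδ, hball⟩ :=
    Metric.isOpen_iff.mp (hT.sdiff (t := {y})).isClosed.isOpen_compl y (by simp)
  exact ⟨δ, hδ, fun x hx hxy => not_lt.mp fun hlt => hball (Metric.mem_ball.mpr hlt) ⟨hx, hxy⟩⟩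

section Collision

variable {ι : Type*} {f a : ι → ℝ}

variable (f a) in
/-- The value of `s` at which the curves `s ↦ f i - s / a i` and `s ↦ f j - s / a j` cross. -/
noncomputable def collisionValue (i j : ι) : ℝ := (f i - f j) * (a i * a j) / (a j - a i)

theorem mul_sq_le_abs_collisionValue {i j : ι} {c e : ℝ} (he : 0 ≤ e)
    (hi : e ≤ |a i|) (hj : e ≤ |a j|) (hij : a i ≠ a j) (hf : c * |a i - a j| ≤ |f i - f j|) :
    c * e ^ 2 ≤ |collisionValue f a i j| := by
  rw [collisionValue, abs_div, abs_mul, abs_mul, abs_sub_comm (a j),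
    le_div_iff₀ (abs_pos.mpr (sub_ne_zero.mpr hij))]
  calc c * e ^ 2 * |a i - a j| = c * |a i - a j| * (e * e) := by ring
    _ ≤ |f i - f j| * (|a i| * |a j|) :=
      mul_le_mul hf (mul_le_mul hi hj he (abs_nonneg _)) (by positivity) (abs_nonneg _)

theorem exists_pos_forall_sub_div_ne {e c : ℝ} (he : 0 < e) (hc : 0 < c)
    (hae : ∀ i, e ≤ |a i|) (ha : Injective a)
    (hfar : ∀ᶠ i in cofinite, ∀ j, c * |a i - a j| ≤ |f i - f j|) :
    ∃ δ > 0, ∀ s, 0 < |s| → |s| < δ → ∀ i j, i ≠ j → f i - s / a i ≠ f j - s / a j := by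
  set S := {i | ¬∀ j, c * |a i - a j| ≤ |f i - f j|}
  have hS : S.Finite := eventually_cofinite.mp hfar
  obtain ⟨δ, hδ, hsep⟩ :=
    ((hS.prod hS).image fun p => collisionValue f a p.1 p.2).exists_pos_le_dist_of_ne 0
  refine ⟨min (c * e ^ 2) δ, by positivity, fun s hs hsδ i j hij hcol => ?_⟩
  have ha0 : ∀ i, a i ≠ 0 := fun i => abs_pos.mp (he.trans_le (hae i))
  have hs_eq : s = collisionValue f a i j :=
    eq_mul_div_of_sub_div_eq_sub_div (ha0 i) (ha0 j) (ha.ne hij) hcol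
  by_cases hnear : i ∈ S ∧ j ∈ S
  · have h := hsep (collisionValue f a i j) ⟨(i, j), hnear, rfl⟩ (hs_eq ▸ abs_pos.mp hs)
    rw [Real.dist_0_eq_abs, ← hs_eq] at h
    linarith [min_le_right (c * e ^ 2) δ]
  · have hfar_ij : c * |a i - a j| ≤ |f i - f j| := by
      rcases not_and_or.mp hnear with hi | hj
      · exact not_not.mp hi j
      · rw [abs_sub_comm, abs_sub_comm (f i)]
        exact not_not.mp hj i
    have h := mul_sq_le_abs_collisionValue he.le (hae i) (hae j) (ha.ne hij) hfar_ij
    rw [← hs_eq] at h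
    linarith [min_le_left (c * e ^ 2) δ]

end Collision

theorem le_abs_intCast_add {ξ : ℝ} (hξ : ξ ≤ 1 / 2) (n : ℤ) : ξ ≤ |(n : ℝ) + ξ| := by
  rcases le_or_gt 0 n with hn | hn
  · have : (0 : ℝ) ≤ n := by exact_mod_cast hn
    exact (le_add_of_nonneg_left this).trans (le_abs_self _)
  · have : (n : ℝ) ≤ -1 := by exact_mod_cast Int.le_sub_one_of_lt hn
    rw [abs_of_neg (by linarith)]
    linarith

theorem tendsto_abs_intCast_add_cofinite (ξ : ℝ) :
    Tendsto (fun n : ℤ => |(n : ℝ) + ξ|) cofinite atTop := by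
  have h : Tendsto (fun n : ℤ => |(n : ℝ)|) cofinite atTop := by
    simpa only [Real.norm_eq_abs, comp_def] using
      tendsto_norm_cocompact_atTop.comp Int.tendsto_coe_cofinite
  refine tendsto_atTop_mono (fun n => ?_) (tendsto_atTop_add_const_right _ (-|ξ|) h)
  have := abs_add_le ((n : ℝ) + ξ) (-ξ)
  rw [add_neg_cancel_right, abs_neg] at this
  linarith

section Dispersion

/-- The frequency `ω_{n,0,ξ}` at `a = n + ξ`. -/
noncomputable def unperturbedFreq (m : ℝ → ℝ) (k a : ℝ) : ℝ := a * (m k - m (k * a))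

variable {m : ℝ → ℝ} {k : ℝ}

theorem unperturbedFreq_neg (hm : ∀ x, m (-x) = m x) (a : ℝ) :
    unperturbedFreq m k (-a) = -unperturbedFreq m k a := by
  simp only [unperturbedFreq, mul_neg, hm]
  ring

theorem unperturbedFreq_neg_fun (a : ℝ) :
    unperturbedFreq (fun x => -m x) k a = -unperturbedFreq m k a := by
  simp only [unperturbedFreq]
  ring

variable (hk : 0 < k) (hm : MonotoneOn m (Ioi 0))
include hk hm

theorem mul_sub_le_unperturbedFreq_sub {A a b : ℝ} (hA : 0 < A) (ha : A ≤ a) (hab : a ≤ b) :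
    (m (k * A) - m k) * (b - a) ≤ unperturbedFreq m k a - unperturbedFreq m k b := by
  have hAb : m (k * A) ≤ m (k * b) := hm (mem_Ioi.mpr (by positivity))
    (mem_Ioi.mpr (by nlinarith)) (by nlinarith)
  have hab' : m (k * a) ≤ m (k * b) := hm (mem_Ioi.mpr (by nlinarith))
    (mem_Ioi.mpr (by nlinarith)) (by nlinarith)
  unfold unperturbedFreq
  -- `F a - F b = (b - a) (m (k b) - m k) + a (m (k b) - m (k a))`
  nlinarith [mul_nonneg (sub_nonneg.mpr hab) (sub_nonneg.mpr hAb),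
    mul_nonneg (hA.le.trans ha) (sub_nonneg.mpr hab')]

theorem mul_le_neg_unperturbedFreq {A a : ℝ} (hA : 0 < A) (ha : A ≤ a) :
    (m (k * A) - m k) * a ≤ -unperturbedFreq m k a := by
  have hAa : m (k * A) ≤ m (k * a) := hm (mem_Ioi.mpr (by positivity))
    (mem_Ioi.mpr (by nlinarith)) (by nlinarith)
  unfold unperturbedFreq
  nlinarith [mul_nonneg (hA.le.trans ha) (sub_nonneg.mpr hAa)]

theorem mul_abs_sub_le_abs_unperturbedFreq_sub (heven : ∀ x, m (-x) = m x) {A u v : ℝ}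
    (hA : 0 < A) (hu : A ≤ |u|) (hv : A ≤ |v|) :
    (m (k * A) - m k) * |u - v| ≤ |unperturbedFreq m k u - unperturbedFreq m k v| := by
  suffices key : ∀ u v, A ≤ u → A ≤ |v| →
      (m (k * A) - m k) * |u - v| ≤ |unperturbedFreq m k u - unperturbedFreq m k v| by
    rcases le_or_gt 0 u with hu0 | hu0
    · exact key u v (by rwa [abs_of_nonneg hu0] at hu) hv
    · have h := key (-u) (-v) (by rwa [abs_of_neg hu0] at hu) (by rwa [abs_neg])
      rwa [neg_sub_neg, unperturbedFreq_neg heven, unperturbedFreq_neg heven, neg_sub_neg,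
        abs_sub_comm v, abs_sub_comm (unperturbedFreq m k v)] at h
  intro u v hu hv
  rcases le_or_gt 0 v with hv0 | hv0
  · rw [abs_of_nonneg hv0] at hv
    rcases le_total u v with huv | hvu
    · have h := mul_sub_le_unperturbedFreq_sub hk hm hA hu huv
      rw [abs_sub_comm, abs_of_nonneg (sub_nonneg.mpr huv)]
      exact h.trans (le_abs_self _)
    · have h := mul_sub_le_unperturbedFreq_sub hk hm hA hv hvu
      rw [abs_of_nonneg (sub_nonneg.mpr hvu), abs_sub_comm]
      exact h.trans (le_abs_self _)
  · rw [abs_of_neg hv0] at hv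
    have hFu := mul_le_neg_unperturbedFreq hk hm hA hu
    have hFv := mul_le_neg_unperturbedFreq hk hm hA hv
    rw [unperturbedFreq_neg heven, neg_neg] at hFv
    rw [abs_of_nonneg (by linarith : 0 ≤ u - v), abs_sub_comm]
    linarith [le_abs_self (unperturbedFreq m k v - unperturbedFreq m k u)]

theorem mul_abs_le_abs_unperturbedFreq (heven : ∀ x, m (-x) = m x) {A u : ℝ} (hA : 0 < A)
    (hu : A ≤ |u|) : (m (k * A) - m k) * |u| ≤ |unperturbedFreq m k u| := by
  have h := mul_abs_sub_le_abs_unperturbedFreq_sub hk hm heven hA hu (v := -u) (by rwa [abs_neg])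
  rw [sub_neg_eq_add, unperturbedFreq_neg heven, sub_neg_eq_add, ← two_mul, ← two_mul, abs_mul,
    abs_mul, abs_two] at h
  linarith

theorem abs_unperturbedFreq_le (heven : ∀ x, m (-x) = m x) {A e v : ℝ} (he : 0 < e)
    (he1 : e ≤ 1) (hA : 1 ≤ A) (hv : e ≤ |v|) (hvA : |v| ≤ A) :
    |unperturbedFreq m k v| ≤ A * (m (k * A) - m (k * e)) := by
  have hm_abs : m (k * v) = m (k * |v|) := by
    rcases abs_choice v with h | h <;> rw [h]
    rw [mul_neg, heven]
  have mono {x y : ℝ} (hx : 0 < x) (hxy : x ≤ y) : m (k * x) ≤ m (k * y) :=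
    hm (mem_Ioi.mpr (by positivity)) (mem_Ioi.mpr (by nlinarith)) (by nlinarith)
  have h1 := mono he hv
  have h2 := mono (he.trans_le hv) hvA
  have h3 := mono he he1
  have h4 := mono one_pos hA
  rw [mul_one] at h3 h4
  rw [unperturbedFreq, hm_abs, abs_mul]
  exact mul_le_mul hvA (abs_sub_le_iff.mpr ⟨by linarith, by linarith⟩) (abs_nonneg _)
    (by linarith)

end Dispersion

theorem exists_pos_mul_abs_sub_le_abs_unperturbedFreq_sub_of_strictMonoOn
    {m : ℝ → ℝ} {k e : ℝ}
    (hm : StrictMonoOn m (Ioi 0)) (heven : ∀ x, m (-x) = m x) (hk : 0 < k) (he : 0 < e)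
    (he1 : e ≤ 1) : ∃ c > 0, ∃ R, ∀ u v, R ≤ |u| → e ≤ |v| →
      c * |u - v| ≤ |unperturbedFreq m k u - unperturbedFreq m k v| := by
  set q := m (k * 2) - m k
  set M := 2 * (m (k * 2) - m (k * e))
  have hq : 0 < q := sub_pos.mpr (hm (mem_Ioi.mpr hk) (mem_Ioi.mpr (by positivity)) (by linarith))
  have hM : 0 ≤ M := by
    have := hm.monotoneOn (mem_Ioi.mpr (by positivity)) (mem_Ioi.mpr (by positivity))
      (by nlinarith : k * e ≤ k * 2)
    linarith
  have hMq : 0 ≤ 2 * M / q := by positivity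
  -- For `|v| < 2` we have `|F v| ≤ M` and `|F u| ≥ q |u|`, and the latter wins once `|u| ≥ R`.
  refine ⟨q / 2, by positivity, 2 + 2 * M / q, fun u v hu hv => ?_⟩
  have hu2 : 2 ≤ |u| := by linarith
  rcases le_or_gt 2 |v| with hv2 | hv2
  · have h := mul_abs_sub_le_abs_unperturbedFreq_sub hk hm.monotoneOn heven two_pos hu2 hv2
    nlinarith [abs_nonneg (u - v)]
  · have hFu := mul_abs_le_abs_unperturbedFreq hk hm.monotoneOn heven two_pos hu2
    have hFv := abs_unperturbedFreq_le hk hm.monotoneOn heven he he1 one_le_two hv hv2.le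
    have huv : |u - v| ≤ |u| + 2 := (abs_sub _ _).trans (by linarith)
    have hqu : 2 * q + 2 * M ≤ q * |u| :=
      calc 2 * q + 2 * M = q * (2 + 2 * M / q) := by field_simp
        _ ≤ q * |u| := mul_le_mul_of_nonneg_left hu hq.le
    calc q / 2 * |u - v| ≤ q / 2 * (|u| + 2) := mul_le_mul_of_nonneg_left huv (by positivity)
      _ ≤ |unperturbedFreq m k u| - |unperturbedFreq m k v| := by linarith
      _ ≤ _ := abs_sub_abs_le_abs_sub _ _

theorem exists_pos_mul_abs_sub_le_abs_unperturbedFreq_sub {m : ℝ → ℝ} {k e : ℝ}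
    (hm : StrictMonoOn m (Ioi 0) ∨ StrictAntiOn m (Ioi 0)) (heven : ∀ x, m (-x) = m x)
    (hk : 0 < k) (he : 0 < e) (he1 : e ≤ 1) : ∃ c > 0, ∃ R, ∀ u v, R ≤ |u| → e ≤ |v| →
      c * |u - v| ≤ |unperturbedFreq m k u - unperturbedFreq m k v| := by
  rcases hm with hm | hm
  · exact exists_pos_mul_abs_sub_le_abs_unperturbedFreq_sub_of_strictMonoOn hm heven hk he he1
  · obtain ⟨c, hc, R, h⟩ := exists_pos_mul_abs_sub_le_abs_unperturbedFreq_sub_of_strictMonoOn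
      (m := fun x => -m x) (fun _ hx _ hy hxy => neg_lt_neg (hm hx hy hxy))
      (fun x => by rw [heven]) hk he he1
    refine ⟨c, hc, R, fun u v hu hv => ?_⟩
    simpa only [unperturbedFreq_neg_fun, neg_sub_neg, abs_sub_comm (unperturbedFreq m k v)]
      using h u v hu hv

theorem no_collisions_small_ell_general (m : ℝ → ℝ) (hmeven : ∀ x, m (-x) = m x)
    (hmono : StrictMonoOn m (Set.Ioi 0) ∨ StrictAntiOn m (Set.Ioi 0))
    (k σ ε ξ : ℝ) (hk : 0 < k) (hσ : σ = 1 ∨ σ = -1) (hε : 0 < ε)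
    (hξ : ξ ∈ Set.Ioc ε (1 / 2)) :
    ∃ lstar : ℝ, 0 < lstar ∧ ∀ ℓ : ℝ, 0 < |ℓ| → |ℓ| < lstar →
      ∀ n n' : ℤ, n ≠ n' →
        ((n : ℝ) + ξ) * (m k - m (k * ((n : ℝ) + ξ))) - σ * ℓ ^ 2 / ((n : ℝ) + ξ)
          ≠ ((n' : ℝ) + ξ) * (m k - m (k * ((n' : ℝ) + ξ))) - σ * ℓ ^ 2 / ((n' : ℝ) + ξ) := by
  obtain ⟨hεξ, hξ_half⟩ := hξ
  have hξ0 : 0 < ξ := hε.trans hεξ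
  obtain ⟨c, hc, R, hexp⟩ :=
    exists_pos_mul_abs_sub_le_abs_unperturbedFreq_sub hmono hmeven hk hξ0 (by linarith)
  obtain ⟨δ, hδ, hsep⟩ := exists_pos_forall_sub_div_ne
    (f := fun n : ℤ => unperturbedFreq m k (n + ξ)) (a := fun n : ℤ => (n : ℝ) + ξ) hξ0 hc
    (le_abs_intCast_add hξ_half) (fun n n' h => Int.cast_injective (add_right_cancel h))
    (((tendsto_abs_intCast_add_cofinite ξ).eventually_ge_atTop R).mono
      fun n hn n' => hexp _ _ hn (le_abs_intCast_add hξ_half n'))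
  have hσℓ (ℓ : ℝ) : |σ * ℓ ^ 2| = |ℓ| ^ 2 := by rcases hσ with rfl | rfl <;> simp
  refine ⟨√δ, Real.sqrt_pos.mpr hδ, fun ℓ hℓ0 hℓ => hsep (σ * ℓ ^ 2) ?_ ?_⟩
  · rw [hσℓ]
    positivity
  · rw [hσℓ]
    exact (Real.lt_sqrt (abs_nonneg ℓ)).mp hℓ

/-- For `ξ ∈ (ε, 1/2]` with `ε > 0`, there exists `ℓ* > 0` such that for all
`0 < |ℓ| < ℓ*` the Bloch frequencies `ω_{n,ℓ,ξ} = (n+ξ)(m(k)-m(k(n+ξ))) - σℓ²/(n+ξ)`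
are pairwise distinct: no collisions among eigenvalues of `A₀(ℓ,ξ)` for small `ℓ`. -/
theorem no_collisions_small_ell (m : ℝ → ℝ) (hmeven : ∀ x, m (-x) = m x) (hm0 : m 0 = 1)
    (hmono : StrictMonoOn m (Set.Ioi 0) ∨ StrictAntiOn m (Set.Ioi 0))
    (k σ ε ξ : ℝ) (hk : 0 < k) (hσ : σ = 1 ∨ σ = -1) (hε : 0 < ε)
    (hξ : ξ ∈ Set.Ioc ε (1 / 2)) :
    ∃ lstar : ℝ, 0 < lstar ∧ ∀ ℓ : ℝ, 0 < |ℓ| → |ℓ| < lstar →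
      ∀ n n' : ℤ, n ≠ n' →
        ((n : ℝ) + ξ) * (m k - m (k * ((n : ℝ) + ξ))) - σ * ℓ ^ 2 / ((n : ℝ) + ξ)
          ≠ ((n' : ℝ) + ξ) * (m k - m (k * ((n' : ℝ) + ξ))) - σ * ℓ ^ 2 / ((n' : ℝ) + ξ) :=
  no_collisions_small_ell_general m hmeven hmono k σ ε ξ hk hσ hε hξ
end

section
/- Let $\xi \in (0,1/2]$, $a, \varepsilon$ real, $\sigma \in \{1,-1\}$. The quadratic $\mu^2 + \mu\sigma\varepsilon\big(\tfrac{1}{\xi-1}+\tfrac{1}{\xi}\big) - \tfrac14 \xi(\xi-1)a^2 + \tfrac{\varepsilon^2}{\xi(\xi-1)} = 0$ has two real roots whenever $|\varepsilon| \geq \xi^{3/2}(1-\xi)^{3/2}|a|$, and two non-real complex conjugate roots whenever $|\varepsilon| < \xi^{3/2}(1-\xi)^{3/2}|a|$ and $a \neq 0$. In the latter case, writing the roots as $\mu_\pm = r \pm is$ with $s > 0$, the corresponding spectral values $\lambda_\pm = i\omega + i\mu_\pm$ (for any real $\omega$) have real parts $\mp s$ of opposite nonzero signs. -/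
open Complex

/-!
Multiplying the discriminant `b² - 4c` by `ξ²(1-ξ)² > 0` gives `ε² - ξ³(1-ξ)³a²`, and
`ξ³(1-ξ)³a²` is the square of the threshold `ξ^{3/2}(1-ξ)^{3/2}|a|`; so the threshold decides
the sign of the discriminant. A nonnegative discriminant gives the real roots `(-b ± √D)/2`, a
negative one the conjugate pair `-b/2 ± i√(-D)/2`, and since `Re(iμ) = -Im μ` the spectral
values `iω + iμ±` have real parts `∓ Im μ+`.
-/

theorem quadratic_eq_mul_sub_mul_sub {K : Type*} [CommRing K] {b c x y : K}
    (hsum : x + y = -b) (hprod : x * y = c) (μ : K) :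
    μ ^ 2 + b * μ + c = (μ - x) * (μ - y) := by
  linear_combination μ * hsum - hprod

theorem exists_real_factorization_of_discrim_nonneg {b c : ℝ} (hD : 0 ≤ discrim 1 b c) :
    ∃ μ₁ μ₂ : ℝ, ∀ μ : ℂ, μ ^ 2 + (b : ℂ) * μ + (c : ℂ) = (μ - (μ₁ : ℂ)) * (μ - (μ₂ : ℂ)) := by
  refine ⟨(-b + √(discrim 1 b c)) / 2, (-b - √(discrim 1 b c)) / 2,
    quadratic_eq_mul_sub_mul_sub (by push_cast; ring) ?_⟩
  have hsqrt : √(discrim 1 b c) ^ 2 = b ^ 2 - 4 * c := by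
    rw [Real.sq_sqrt hD, discrim]
    ring
  rw [← ofReal_mul, ofReal_inj]
  linear_combination -hsqrt / 4

theorem exists_conj_roots_of_discrim_neg {b c : ℝ} (hD : discrim 1 b c < 0) :
    ∃ r s : ℝ, 0 < s ∧ ∀ μ : ℂ, μ ^ 2 + (b : ℂ) * μ + (c : ℂ) = 0 ↔
      (μ = (r : ℂ) + (s : ℂ) * I ∨ μ = (r : ℂ) - (s : ℂ) * I) := by
  set s := √(-discrim 1 b c) / 2 with hs
  have hs_pos : 0 < s := by
    have : 0 < √(-discrim 1 b c) := Real.sqrt_pos.2 (by linarith)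
    positivity
  have hs_sq : 4 * s ^ 2 = 4 * c - b ^ 2 := by
    rw [hs, div_pow, Real.sq_sqrt (by linarith), discrim]
    ring
  set r := -b / 2
  have hprod : (r : ℂ) ^ 2 + (s : ℂ) ^ 2 = c := by
    rw [← ofReal_pow, ← ofReal_pow, ← ofReal_add, ofReal_inj]
    linear_combination hs_sq / 4
  have hfactor : ∀ μ : ℂ, μ ^ 2 + (b : ℂ) * μ + (c : ℂ)
      = (μ - ((r : ℂ) + (s : ℂ) * I)) * (μ - ((r : ℂ) - (s : ℂ) * I)) :=
    quadratic_eq_mul_sub_mul_sub (by push_cast [r]; ring)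
      (by linear_combination hprod - (s : ℂ) ^ 2 * I_sq)
  refine ⟨r, s, hs_pos, fun μ => ?_⟩
  rw [hfactor, mul_eq_zero, sub_eq_zero, sub_eq_zero]

theorem discrim_mul_sq_eq {ξ σ a ε : ℝ} (hσ : σ ^ 2 = 1) (hξ₀ : ξ ≠ 0) (hξ₁ : ξ - 1 ≠ 0) :
    discrim 1 (σ * ε * (1 / (ξ - 1) + 1 / ξ))
        (-(1 / 4) * ξ * (ξ - 1) * a ^ 2 + ε ^ 2 / (ξ * (ξ - 1))) * (ξ ^ 2 * (1 - ξ) ^ 2)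
      = ε ^ 2 - ξ ^ 3 * (1 - ξ) ^ 3 * a ^ 2 := by
  rw [discrim, mul_pow, mul_pow, hσ]
  field_simp
  ring

theorem rpow_three_halves_mul_abs_le_abs_iff {x y a ε : ℝ} (hx : 0 ≤ x) (hy : 0 ≤ y) :
    x ^ ((3 : ℝ) / 2) * y ^ ((3 : ℝ) / 2) * |a| ≤ |ε| ↔ x ^ 3 * y ^ 3 * a ^ 2 ≤ ε ^ 2 := by
  have hsq : ∀ {z : ℝ}, 0 ≤ z → (z ^ ((3 : ℝ) / 2)) ^ 2 = z ^ 3 := fun hz => by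
    rw [← Real.rpow_mul_natCast hz]
    norm_num
  have hnonneg : 0 ≤ x ^ ((3 : ℝ) / 2) * y ^ ((3 : ℝ) / 2) * |a| := by positivity
  rw [← abs_of_nonneg hnonneg, ← sq_le_sq, mul_pow, mul_pow, hsq hx, hsq hy, sq_abs]

/-- Instability mechanism of Lemma 4.3: the quadratic
`μ² + μσε(1/(ξ-1)+1/ξ) - ¼ξ(ξ-1)a² + ε²/(ξ(ξ-1)) = 0` has two real roots when
`|ε| ≥ ξ^{3/2}(1-ξ)^{3/2}|a|`, and two non-real complex conjugate roots `r ± is`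
(`s > 0`) when `|ε| < ξ^{3/2}(1-ξ)^{3/2}|a|` and `a ≠ 0`; in the latter case the
spectral values `λ± = iω + iμ±` have real parts `∓s` of opposite nonzero signs. -/
theorem complex_roots_instability (ξ σ a ε : ℝ) (hξ : ξ ∈ Set.Ioc 0 (1 / 2))
    (hσ : σ = 1 ∨ σ = -1) :
    ∀ b c : ℝ,
      b = σ * ε * (1 / (ξ - 1) + 1 / ξ) →
      c = -(1 / 4) * ξ * (ξ - 1) * a ^ 2 + ε ^ 2 / (ξ * (ξ - 1)) →
      ((ξ ^ ((3 : ℝ) / 2) * (1 - ξ) ^ ((3 : ℝ) / 2) * |a| ≤ |ε| →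
        ∃ μ₁ μ₂ : ℝ, ∀ μ : ℂ,
          μ ^ 2 + (b : ℂ) * μ + (c : ℂ) = (μ - (μ₁ : ℂ)) * (μ - (μ₂ : ℂ))) ∧
      (|ε| < ξ ^ ((3 : ℝ) / 2) * (1 - ξ) ^ ((3 : ℝ) / 2) * |a| → a ≠ 0 →
        ∃ r s : ℝ, 0 < s ∧
          (∀ μ : ℂ, μ ^ 2 + (b : ℂ) * μ + (c : ℂ) = 0 ↔
            (μ = (r : ℂ) + (s : ℂ) * Complex.I ∨ μ = (r : ℂ) - (s : ℂ) * Complex.I)) ∧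
          (∀ ω : ℝ,
            (Complex.I * (ω : ℂ) + Complex.I * ((r : ℂ) + (s : ℂ) * Complex.I)).re = -s ∧
            (Complex.I * (ω : ℂ) + Complex.I * ((r : ℂ) - (s : ℂ) * Complex.I)).re = s))) := by
  obtain ⟨hξ₀, hξ_half⟩ := hξ
  have hσ_sq : σ ^ 2 = 1 := by rcases hσ with rfl | rfl <;> norm_num
  have hweight : 0 < ξ ^ 2 * (1 - ξ) ^ 2 := by
    have : 0 < 1 - ξ := by linarith
    positivity
  intro b c rfl rfl
  have hsign : 0 ≤ discrim 1 (σ * ε * (1 / (ξ - 1) + 1 / ξ))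
      (-(1 / 4) * ξ * (ξ - 1) * a ^ 2 + ε ^ 2 / (ξ * (ξ - 1)))
        ↔ ξ ^ 3 * (1 - ξ) ^ 3 * a ^ 2 ≤ ε ^ 2 := by
    rw [← mul_nonneg_iff_of_pos_right hweight,
      discrim_mul_sq_eq hσ_sq hξ₀.ne' (by linarith), sub_nonneg]
  have hthreshold := rpow_three_halves_mul_abs_le_abs_iff (a := a) (ε := ε) hξ₀.le
    (by linarith : 0 ≤ 1 - ξ)
  refine ⟨fun h => exists_real_factorization_of_discrim_nonneg (hsign.2 (hthreshold.1 h)),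
    fun h _ => ?_⟩
  obtain ⟨r, s, hs, hroots⟩ :=
    exists_conj_roots_of_discrim_neg (not_le.1 (mt hsign.1 (mt hthreshold.2 (not_le.2 h))))
  exact ⟨r, s, hs, hroots, fun ω => by simp⟩
end
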